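/- (Fixed-action Bellman solution.) Fix θ ∈ (0,1)\{1/2} and γ ∈ (0,1). Consider an action with observation likelihoods p(y=1|s=+1) = θ, p(y=1|s=−1) = 1−θ, so that under belief β ∈ (−1,1) the win probability is p_β(1) = (1 + β(2θ−1))/2 and the Bayesian belief updates are β'_1 = (β + (2θ−1))/(1 + β(2θ−1)) after y=1 and β'_0 = (β − (2θ−1))/(1 − β(2θ−1)) after y=0. Let ζ ∈ ℝ satisfy (1−θ)^ζ θ^{1−ζ} + θ^ζ (1−θ)^{1−ζ} = 1/γ and let C ∈ ℝ be arbitrary. Then the function v(β) = (1 + β(2θ−1))/(2(1−γ)) + C ((1−β)/2)^ζ ((1+β)/2)^{1−ζ} satisfies, for all β ∈ (−1,1), the fixed-action Bellman recursion v(β) = (1 + β(2θ−1))/2 + γ [ p_β(1) v(β'_1) + (1 − p_β(1)) v(β'_0) ]. -/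

import Mathlib

/-!
Both parts of the ansatz are eigenfunctions of the one-step expectation
`f ↦ p_β(1) f(β'_1) + (1 − p_β(1)) f(β'_0)`.  The belief is a martingale,
`p_β(1) β'_1 + (1 − p_β(1)) β'_0 = β`, so affine functions have eigenvalue `1` and the affine
part `r/(1−γ)`, with `r` the expected reward, solves the recursion on its own.  The map
`(x, y) ↦ x^ζ y^{1−ζ}` is homogeneous of degree one and each posterior weight `(1 ± β'_y)/2` is
the prior weight times a likelihood divided by `p_β(y)`, so `h(β) = ((1−β)/2)^ζ ((1+β)/2)^{1−ζ}`
has eigenvalue `(1−θ)^ζ θ^{1−ζ} + θ^ζ (1−θ)^{1−ζ} = 1/γ`.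
-/

/-- The ansatz value function
`v(β) = (1 + β(2θ−1))/(2(1−γ)) + C ((1−β)/2)^ζ ((1+β)/2)^{1−ζ}`. -/
noncomputable def vSol (θ γ ζ C β : ℝ) : ℝ :=
  (1 + β * (2 * θ - 1)) / (2 * (1 - γ))
    + C * ((1 - β) / 2) ^ ζ * ((1 + β) / 2) ^ (1 - ζ)

open Real Set

noncomputable def powerPart (ζ β : ℝ) : ℝ :=
  ((1 - β) / 2) ^ ζ * ((1 + β) / 2) ^ (1 - ζ)

lemma vSol_eq (θ γ ζ C β : ℝ) :
    vSol θ γ ζ C β = (1 + β * (2 * θ - 1)) / (2 * (1 - γ)) + C * powerPart ζ β := by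
  rw [vSol, powerPart, mul_assoc]

lemma mul_div_rpow_mul_div_rpow_one_sub {p x y : ℝ} (hp : 0 < p) (hx : 0 ≤ x) (hy : 0 ≤ y)
    (ζ : ℝ) : p * ((x / p) ^ ζ * (y / p) ^ (1 - ζ)) = x ^ ζ * y ^ (1 - ζ) := by
  have hpp : p ^ ζ * p ^ (1 - ζ) = p := by rw [← rpow_add hp, add_sub_cancel, rpow_one]
  rw [div_rpow hx hp.le, div_rpow hy hp.le, div_mul_div_comm, hpp,
    mul_div_cancel₀ _ hp.ne']

lemma abs_mul_lt_one {β κ : ℝ} (hβ : β ∈ Ioo (-1 : ℝ) 1) (hκ : |κ| ≤ 1) : |β * κ| < 1 := by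
  rw [abs_mul]
  exact mul_lt_one_of_nonneg_of_lt_one_left (abs_nonneg β) (abs_lt.2 hβ) hκ

lemma abs_two_mul_sub_one_le_one {q : ℝ} (hq0 : 0 ≤ q) (hq1 : q ≤ 1) : |2 * q - 1| ≤ 1 :=
  abs_le.2 ⟨by linarith, by linarith⟩

lemma outcome_prob_mul_powerPart_update {q β : ℝ} (hq0 : 0 ≤ q) (hq1 : q ≤ 1)
    (hβ : β ∈ Ioo (-1 : ℝ) 1) (ζ : ℝ) :
    (1 + β * (2 * q - 1)) / 2 * powerPart ζ ((β + (2 * q - 1)) / (1 + β * (2 * q - 1)))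
      = (1 - q) ^ ζ * q ^ (1 - ζ) * powerPart ζ β := by
  have hp : 0 < (1 + β * (2 * q - 1)) / 2 := by
    linarith [neg_abs_le (β * (2 * q - 1)), abs_mul_lt_one hβ (abs_two_mul_sub_one_le_one hq0 hq1)]
  have hp' : 1 + β * (2 * q - 1) ≠ 0 := by linarith
  have hminus : (1 - (β + (2 * q - 1)) / (1 + β * (2 * q - 1))) / 2
      = (1 - β) / 2 * (1 - q) / ((1 + β * (2 * q - 1)) / 2) := by
    field_simp; ring
  have hplus : (1 + (β + (2 * q - 1)) / (1 + β * (2 * q - 1))) / 2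
      = (1 + β) / 2 * q / ((1 + β * (2 * q - 1)) / 2) := by
    field_simp; ring
  have hβm : 0 ≤ (1 - β) / 2 := by linarith [hβ.2]
  have hβp : 0 ≤ (1 + β) / 2 := by linarith [hβ.1]
  rw [powerPart, hminus, hplus,
    mul_div_rpow_mul_div_rpow_one_sub hp (mul_nonneg hβm (by linarith)) (mul_nonneg hβp hq0),
    mul_rpow hβm (by linarith), mul_rpow hβp hq0, powerPart]
  ring

lemma powerPart_expected_update {θ β : ℝ} (hθ0 : 0 ≤ θ) (hθ1 : θ ≤ 1)
    (hβ : β ∈ Ioo (-1 : ℝ) 1) (ζ : ℝ) :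
    (1 + β * (2 * θ - 1)) / 2 * powerPart ζ ((β + (2 * θ - 1)) / (1 + β * (2 * θ - 1)))
      + (1 - (1 + β * (2 * θ - 1)) / 2)
        * powerPart ζ ((β - (2 * θ - 1)) / (1 - β * (2 * θ - 1)))
      = ((1 - θ) ^ ζ * θ ^ (1 - ζ) + θ ^ ζ * (1 - θ) ^ (1 - ζ)) * powerPart ζ β := by
  have hwin := outcome_prob_mul_powerPart_update hθ0 hθ1 hβ ζ
  -- a loss is the outcome with likelihoods `1 − θ` and `θ`
  have hloss := outcome_prob_mul_powerPart_update (q := 1 - θ) (by linarith) (by linarith) hβ ζ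
  rw [show 2 * (1 - θ) - 1 = -(2 * θ - 1) by ring, mul_neg, ← sub_eq_add_neg, ← sub_eq_add_neg,
    sub_sub_cancel, show (1 - β * (2 * θ - 1)) / 2 = 1 - (1 + β * (2 * θ - 1)) / 2 by ring]
    at hloss
  rw [hwin, hloss]
  ring

lemma belief_update_martingale {κ β : ℝ} (h₁ : 1 + β * κ ≠ 0) (h₀ : 1 - β * κ ≠ 0) :
    (1 + β * κ) / 2 * ((β + κ) / (1 + β * κ)) + (1 - (1 + β * κ) / 2) * ((β - κ) / (1 - β * κ))
      = β := by
  field_simp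
  ring

lemma affine_bellman {γ κ p β x y : ℝ} (hγ : γ ≠ 1) (hmart : p * x + (1 - p) * y = β) :
    (1 + β * κ) / (2 * (1 - γ))
      = (1 + β * κ) / 2
        + γ * (p * ((1 + x * κ) / (2 * (1 - γ))) + (1 - p) * ((1 + y * κ) / (2 * (1 - γ)))) := by
  have : 1 - γ ≠ 0 := sub_ne_zero.mpr hγ.symm
  rw [← hmart]
  field_simp
  ring

theorem fixed_action_bellman_solution_general
    (θ γ ζ C : ℝ) (hθ0 : 0 < θ) (hθ1 : θ < 1)
    (hγ : γ ∈ Set.Ioo (0 : ℝ) 1)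
    (hζ : (1 - θ) ^ ζ * θ ^ (1 - ζ) + θ ^ ζ * (1 - θ) ^ (1 - ζ) = 1 / γ) :
    ∀ β ∈ Set.Ioo (-1 : ℝ) 1,
      vSol θ γ ζ C β
        = (1 + β * (2 * θ - 1)) / 2
          + γ * ((1 + β * (2 * θ - 1)) / 2
                  * vSol θ γ ζ C ((β + (2 * θ - 1)) / (1 + β * (2 * θ - 1)))
                + (1 - (1 + β * (2 * θ - 1)) / 2)
                  * vSol θ γ ζ C ((β - (2 * θ - 1)) / (1 - β * (2 * θ - 1)))) := by
  intro β hβ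
  obtain ⟨hκ₀, hκ₁⟩ := abs_lt.1 (abs_mul_lt_one hβ (abs_two_mul_sub_one_le_one hθ0.le hθ1.le))
  have hmart := belief_update_martingale (κ := 2 * θ - 1) (β := β) (by linarith) (by linarith)
  have haffine := affine_bellman (κ := 2 * θ - 1) hγ.2.ne hmart
  have hpower := powerPart_expected_update hθ0.le hθ1.le hβ ζ
  have hγζ : γ * ((1 - θ) ^ ζ * θ ^ (1 - ζ) + θ ^ ζ * (1 - θ) ^ (1 - ζ)) = 1 := by
    rw [hζ, mul_one_div_cancel hγ.1.ne']
  simp only [vSol_eq]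
  linear_combination haffine - γ * C * hpower - C * powerPart ζ β * hγζ

theorem fixed_action_bellman_solution
    (θ γ ζ C : ℝ) (hθ0 : 0 < θ) (hθ1 : θ < 1) (hθ : θ ≠ 1 / 2)
    (hγ : γ ∈ Set.Ioo (0 : ℝ) 1)
    (hζ : (1 - θ) ^ ζ * θ ^ (1 - ζ) + θ ^ ζ * (1 - θ) ^ (1 - ζ) = 1 / γ) :
    ∀ β ∈ Set.Ioo (-1 : ℝ) 1,
      vSol θ γ ζ C β
        = (1 + β * (2 * θ - 1)) / 2
          + γ * ((1 + β * (2 * θ - 1)) / 2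
                  * vSol θ γ ζ C ((β + (2 * θ - 1)) / (1 + β * (2 * θ - 1)))
                + (1 - (1 + β * (2 * θ - 1)) / 2)
                  * vSol θ γ ζ C ((β - (2 * θ - 1)) / (1 - β * (2 * θ - 1)))) :=
  fixed_action_bellman_solution_general θ γ ζ C hθ0 hθ1 hγ hζ
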